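/- Consider a one-dimensional periodic mesh of N ≥ 1 elements indexed by i ∈ ℤ/Nℤ, each with p+1 nodes (p ≥ 1). Let Q be a (p+1)×(p+1) real matrix with Q + Qᵀ = B (B the boundary matrix) and rows summing to zero. Let u_{i,j} ∈ ℝ^m be nodal states, w : ℝ^m → ℝ^m, ψ : ℝ^m → ℝ, let F be a symmetric two-point volume flux satisfying Tadmor's entropy-conservation condition, and let f* : ℝ^m × ℝ^m → ℝ^m be an entropy-stable interface flux, i.e. ⟨w(b) − w(a), f*(a,b)⟩ ≤ ψ(b) − ψ(a) for all a, b. Define r_{i,j} := s_{i,j} − ∑_k (2Q − B)_{jk} F(u_{i,j}, u_{i,k}), where s_{i,0} = f*(u_{i−1,p}, u_{i,0}), s_{i,p} = −f*(u_{i,p}, u_{i+1,0}), and s_{i,j} = 0 for 0 < j < p. Then the total entropy production is nonpositive: ∑_{i} ∑_{j} ⟨w(u_{i,j}), r_{i,j}⟩ ≤ 0. -/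

import Mathlib

/-! Since `Q + Qᵀ = B`, the volume operator `2Q - B` equals `Q - Qᵀ`. Testing the
flux-differencing term against `w`, symmetry of `F` lets one move `Qᵀ` onto the other argument,
and Tadmor's condition turns `∑ Q_jk ⟪w_j - w_k, F_jk⟫` into `∑ Q_jk (ψ_j - ψ_k)`; the zero row
sums and the SBP property telescope this to `ψ(u_0) - ψ(u_p)`. Each element thus produces its
boundary entropy fluxes minus `ψ(u_0) - ψ(u_p)`, and after shifting the element index the
contributions regroup interface by interface into `⟪w_R - w_L, f*⟫ - (ψ_R - ψ_L) ≤ 0`. -/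

open Matrix

open Finset
open scoped RealInnerProductSpace

def boundaryMatrix (p : ℕ) : Matrix (Fin (p + 1)) (Fin (p + 1)) ℝ :=
  Matrix.diagonal fun i => if i = 0 then (-1 : ℝ) else if i = Fin.last p then 1 else 0

lemma Fin.sum_ite_zero_last {M : Type*} [AddCommMonoid M] {p : ℕ} (hp : 1 ≤ p)
    (f g : Fin (p + 1) → M) :
    ∑ j, (if j = 0 then f j else if j = Fin.last p then g j else 0) = f 0 + g (Fin.last p) := by
  have h0 : (0 : Fin (p + 1)) ≠ Fin.last p := by
    simp only [ne_eq, Fin.ext_iff, Fin.val_zero, Fin.val_last]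
    omega
  have hsplit : ∀ j : Fin (p + 1), (if j = 0 then f j else if j = Fin.last p then g j else 0)
      = (if j = 0 then f j else 0) + (if j = Fin.last p then g j else 0) := by
    intro j
    rcases eq_or_ne j 0 with rfl | hj
    · simp [h0]
    · simp [hj]
  simp only [hsplit, sum_add_distrib, sum_ite_eq', mem_univ, if_true]

lemma sum_boundaryMatrix_diag_mul {p : ℕ} (hp : 1 ≤ p) (a : Fin (p + 1) → ℝ) :
    ∑ j, (if j = 0 then (-1 : ℝ) else if j = Fin.last p then 1 else 0) * a j
      = a (Fin.last p) - a 0 := by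
  simp only [ite_mul, neg_one_mul, one_mul, zero_mul]
  rw [Fin.sum_ite_zero_last hp]
  ring

lemma two_smul_sub_eq_sub_transpose {ι R : Type*} [Ring R] {Q B : Matrix ι ι R}
    (hSBP : Q + Qᵀ = B) : (2 : R) • Q - B = Q - Qᵀ := by
  rw [← hSBP, two_smul]
  abel

lemma sum_sum_mul_sub_of_add_transpose_eq_diagonal {ι R : Type*} [Fintype ι] [DecidableEq ι]
    [CommRing R] {Q : Matrix ι ι R} {d : ι → R} (hSBP : Q + Qᵀ = diagonal d)
    (hQ : ∀ j, ∑ k, Q j k = 0) (a : ι → R) :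
    ∑ j, ∑ k, Q j k * (a j - a k) = -∑ j, d j * a j := by
  have hcol : ∀ k, ∑ j, Q j k = d k := by
    intro k
    have h : ∀ j, Q j k = diagonal d j k - Q k j := fun j => by
      rw [← hSBP, Matrix.add_apply, transpose_apply]
      ring
    simp only [h, sum_sub_distrib, hQ k, sub_zero, diagonal_apply, sum_ite_eq', mem_univ, if_true]
  calc ∑ j, ∑ k, Q j k * (a j - a k)
      = ∑ j, (∑ k, Q j k) * a j - ∑ k, (∑ j, Q j k) * a k := by
        simp only [mul_sub, sum_sub_distrib, sum_mul]
        rw [sum_comm (f := fun j k => Q j k * a k)]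
    _ = -∑ j, d j * a j := by simp only [hQ, hcol, zero_mul, sum_const_zero, zero_sub]

section EntropyConservative

variable {E : Type*} [NormedAddCommGroup E] [InnerProductSpace ℝ E]
  {w : E → E} {ψ : E → ℝ} {F : E → E → E}

lemma sum_inner_sum_sub_transpose_smul_flux {ι : Type*} [Fintype ι]
    (hFsym : ∀ a b, F a b = F b a) (hFEC : ∀ a b, ⟪w a - w b, F a b⟫ = ψ a - ψ b)
    (Q : Matrix ι ι ℝ) (v : ι → E) :
    ∑ j, ⟪w (v j), ∑ k, (Q - Qᵀ) j k • F (v j) (v k)⟫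
      = ∑ j, ∑ k, Q j k * (ψ (v j) - ψ (v k)) := by
  have hswap : ∑ j, ∑ k, Q k j * ⟪w (v j), F (v j) (v k)⟫
      = ∑ j, ∑ k, Q j k * ⟪w (v k), F (v j) (v k)⟫ := by
    rw [sum_comm]
    simp only [hFsym (v _) (v _)]
  calc ∑ j, ⟪w (v j), ∑ k, (Q - Qᵀ) j k • F (v j) (v k)⟫
      = ∑ j, ∑ k, Q j k * ⟪w (v j), F (v j) (v k)⟫
          - ∑ j, ∑ k, Q k j * ⟪w (v j), F (v j) (v k)⟫ := by
        simp only [inner_sum, real_inner_smul_right, Matrix.sub_apply, transpose_apply, sub_mul,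
          sum_sub_distrib]
    _ = ∑ j, ∑ k, Q j k * ⟪w (v j) - w (v k), F (v j) (v k)⟫ := by
        simp only [hswap, inner_sub_left, mul_sub, sum_sub_distrib]
    _ = ∑ j, ∑ k, Q j k * (ψ (v j) - ψ (v k)) := by simp only [hFEC]

theorem element_entropy_production {p : ℕ} (hp : 1 ≤ p)
    {Q : Matrix (Fin (p + 1)) (Fin (p + 1)) ℝ}
    (hSBP : Q + Qᵀ = boundaryMatrix p) (hQ : ∀ j, ∑ k, Q j k = 0)
    (hFsym : ∀ a b, F a b = F b a) (hFEC : ∀ a b, ⟪w a - w b, F a b⟫ = ψ a - ψ b)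
    (v : Fin (p + 1) → E) (fL fR : E) :
    ∑ j, ⟪w (v j), (if j = 0 then fL else if j = Fin.last p then -fR else 0)
        - ∑ k, ((2 : ℝ) • Q - boundaryMatrix p) j k • F (v j) (v k)⟫
      = ⟪w (v 0), fL⟫ - ⟪w (v (Fin.last p)), fR⟫ - (ψ (v 0) - ψ (v (Fin.last p))) := by
  have hsurface : ∑ j, ⟪w (v j), if j = 0 then fL else if j = Fin.last p then -fR else 0⟫
      = ⟪w (v 0), fL⟫ - ⟪w (v (Fin.last p)), fR⟫ := by
    simp only [apply_ite (inner ℝ (w (v _))), inner_zero_right, inner_neg_right]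
    rw [Fin.sum_ite_zero_last hp, sub_eq_add_neg]
  have hvolume : ∑ j, ⟪w (v j), ∑ k, ((2 : ℝ) • Q - boundaryMatrix p) j k • F (v j) (v k)⟫
      = ψ (v 0) - ψ (v (Fin.last p)) := by
    rw [two_smul_sub_eq_sub_transpose hSBP, sum_inner_sum_sub_transpose_smul_flux hFsym hFEC,
      sum_sum_mul_sub_of_add_transpose_eq_diagonal hSBP hQ, sum_boundaryMatrix_diag_mul hp]
    ring
  simp only [inner_sub_right, sum_sub_distrib, hsurface, hvolume]

end EntropyConservative

theorem periodic_interface_entropy_production_nonpos {G E : Type*} [AddGroupWithOne G]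
    [Fintype G] [NormedAddCommGroup E] [InnerProductSpace ℝ E]
    {w : E → E} {ψ : E → ℝ} {fstar : E → E → E}
    (hfstarES : ∀ a b, ⟪w b - w a, fstar a b⟫ ≤ ψ b - ψ a) (uL uR : G → E) :
    ∑ i, (⟪w (uL i), fstar (uR (i - 1)) (uL i)⟫ - ⟪w (uR i), fstar (uR i) (uL (i + 1))⟫
      - (ψ (uL i) - ψ (uR i))) ≤ 0 := by
  have hshift : ∀ g : G → ℝ, ∑ i, g i = ∑ i, g (i + 1) := fun g =>
    (Equiv.sum_comp (Equiv.addRight 1) g).symm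
  calc _ = ∑ i, (⟪w (uL (i + 1)) - w (uR i), fstar (uR i) (uL (i + 1))⟫
          - (ψ (uL (i + 1)) - ψ (uR i))) := by
        simp only [sum_sub_distrib, inner_sub_left]
        rw [hshift fun i => ⟪w (uL i), fstar (uR (i - 1)) (uL i)⟫,
          hshift fun i => ψ (uL i)]
        simp only [add_sub_cancel_right]
    _ ≤ 0 := sum_nonpos fun i _ => sub_nonpos.mpr (hfstarES _ _)

/-- On a periodic 1D mesh of `N` elements, the DG scheme with flux-differencing volume
terms built from an SBP operator `Q`, a symmetric entropy-conservative two-point volume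
flux `F`, and an entropy-stable interface flux `fstar` has nonpositive total entropy
production. -/
theorem periodic_flux_differencing_entropy_stability
    (N p m : ℕ) [NeZero N] (hp : 1 ≤ p)
    (Q : Matrix (Fin (p + 1)) (Fin (p + 1)) ℝ)
    (hSBP : Q + Qᵀ = boundaryMatrix p) (hQ : ∀ j, ∑ k, Q j k = 0)
    (u : ZMod N → Fin (p + 1) → EuclideanSpace ℝ (Fin m))
    (w : EuclideanSpace ℝ (Fin m) → EuclideanSpace ℝ (Fin m))
    (ψ : EuclideanSpace ℝ (Fin m) → ℝ)
    (F : EuclideanSpace ℝ (Fin m) → EuclideanSpace ℝ (Fin m) → EuclideanSpace ℝ (Fin m))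
    (fstar : EuclideanSpace ℝ (Fin m) → EuclideanSpace ℝ (Fin m) → EuclideanSpace ℝ (Fin m))
    (hFsym : ∀ a b, F a b = F b a)
    (hFEC : ∀ a b, ⟪w a - w b, F a b⟫ = ψ a - ψ b)
    (hfstarES : ∀ a b, ⟪w b - w a, fstar a b⟫ ≤ ψ b - ψ a) :
    ∑ i : ZMod N, ∑ j : Fin (p + 1),
      ⟪w (u i j),
        (if j = 0 then fstar (u (i - 1) (Fin.last p)) (u i 0)
          else if j = Fin.last p then -fstar (u i (Fin.last p)) (u (i + 1) 0)
          else 0)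
        - ∑ k, ((2 : ℝ) • Q - boundaryMatrix p) j k • F (u i j) (u i k)⟫ ≤ 0 := by
  simp only [element_entropy_production hp hSBP hQ hFsym hFEC]
  exact periodic_interface_entropy_production_nonpos hfstarES (fun i => u i 0)
    (fun i => u i (Fin.last p))
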